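/- arXiv:2208.05076 — 6 statements merged into one kernel-verified Lean document; each statement's English description precedes it below -/
import Mathlib

section
/- Let p1, p2, p3 be vectors in ℝ³ that are not collinear (do not all lie on a common line through the origin) and satisfy p1 + p2 + p3 = 0. Suppose t1, t2, t3 ∈ ℝ³ satisfy ⟨tⱼ, pⱼ⟩ = 0 for j = 1,2,3 and t1 + t2 + t3 = 0. Then there exists a skew-symmetric linear map a : ℝ³ → ℝ³ (i.e. ⟨a v, w⟩ + ⟨v, a w⟩ = 0 for all v, w) such that tⱼ = a(pⱼ) for j = 1,2,3. -/
open scoped InnerProductSpace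

/-!
Write `u ∧ v` for the skew map `x ↦ ⟪u, x⟫ v - ⟪v, x⟫ u` and let `q` be the family dual to the
independent family `p`, i.e. `⟪qᵢ, pⱼ⟫ = δᵢⱼ`. Then `∑ᵢ qᵢ ∧ tᵢ` sends `pⱼ` to
`tⱼ - ∑ᵢ ⟪tᵢ, pⱼ⟫ qᵢ`, and the error term is cancelled by the skew map
`½ ∑ᵢₖ ⟪tᵢ, pₖ⟫ qₖ ∧ qᵢ`, because the matrix `⟪tᵢ, pₖ⟫` is antisymmetric.
For the triangle, `p₃` and `t₃` are determined by the other two, non-collinearity makes `p₁, p₂`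
independent, and `⟪t₃, p₃⟫ = 0` is the missing antisymmetry `⟪t₁, p₂⟫ + ⟪t₂, p₁⟫ = 0`.
-/

theorem exists_smul_eq_of_not_linearIndependent_pair {K V : Type*} [DivisionRing K]
    [AddCommGroup V] [Module K V] {x y : V} (h : ¬ LinearIndependent K ![x, y]) :
    ∃ v : V, (∃ c : K, x = c • v) ∧ (∃ c : K, y = c • v) := by
  rw [linearIndependent_fin2] at h
  simp only [Matrix.cons_val_one, Matrix.cons_val_fin_one, Matrix.cons_val_zero, not_and_or,
    not_not, not_forall] at h
  rcases h with rfl | ⟨c, rfl⟩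
  · exact ⟨x, ⟨1, (one_smul K x).symm⟩, 0, (zero_smul K x).symm⟩
  · exact ⟨y, ⟨c, rfl⟩, 1, (one_smul K y).symm⟩

section InnerProduct

variable {E : Type*} [NormedAddCommGroup E] [InnerProductSpace ℝ E]

theorem LinearIndependent.exists_inner_eq_ite {ι : Type*} [Finite ι] [DecidableEq ι]
    {p : ι → E} (hp : LinearIndependent ℝ p) :
    ∃ q : ι → E, ∀ i j, ⟪q i, p j⟫_ℝ = if i = j then 1 else 0 := by
  have := FiniteDimensional.span_of_finite ℝ (Set.finite_range p)
  let b := Module.Basis.span hp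
  refine ⟨fun i ↦ (InnerProductSpace.toDual ℝ (Submodule.span ℝ (Set.range p))).symm
    (b.coord i).toContinuousLinearMap, fun i j ↦ ?_⟩
  have hpj : p j = (b j : E) := by rw [Module.Basis.span_apply]
  rw [hpj, ← Submodule.coe_inner, InnerProductSpace.toDual_symm_apply]
  simp [Finsupp.single_apply, eq_comm]

namespace InnerProductSpace

theorem mem_skewAdjointSubmodule_innerₗ_iff {a : Module.End ℝ E} :
    a ∈ (innerₗ E).skewAdjointSubmodule ↔ ∀ v w, ⟪a v, w⟫_ℝ + ⟪v, a w⟫_ℝ = 0 := by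
  simp only [LinearMap.mem_skewAdjointSubmodule, LinearMap.IsSkewAdjoint, LinearMap.IsAdjointPair,
    innerₗ_apply_apply, Pi.neg_apply, inner_neg_right, eq_neg_iff_add_eq_zero]

noncomputable def wedge (u v : E) : Module.End ℝ E :=
  (innerₗ E u).smulRight v - (innerₗ E v).smulRight u

@[simp]
theorem wedge_apply (u v x : E) : wedge u v x = ⟪u, x⟫_ℝ • v - ⟪v, x⟫_ℝ • u := rfl

theorem wedge_mem_skewAdjointSubmodule (u v : E) :
    wedge u v ∈ (innerₗ E).skewAdjointSubmodule := by
  rw [mem_skewAdjointSubmodule_innerₗ_iff]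
  intro x y
  simp only [wedge_apply, inner_sub_left, inner_sub_right, inner_smul_left, inner_smul_right,
    RCLike.conj_to_real, real_inner_comm x]
  ring

theorem exists_mem_skewAdjointSubmodule_apply_eq {ι : Type*} [Fintype ι] {p t : ι → E}
    (hp : LinearIndependent ℝ p) (ht : ∀ i j, ⟪t i, p j⟫_ℝ + ⟪t j, p i⟫_ℝ = 0) :
    ∃ a ∈ (innerₗ E).skewAdjointSubmodule, ∀ i, a (p i) = t i := by
  classical
  obtain ⟨q, hq⟩ := hp.exists_inner_eq_ite
  refine ⟨∑ i, wedge (q i) (t i) + (2 : ℝ)⁻¹ • ∑ i, ∑ k, ⟪t i, p k⟫_ℝ • wedge (q k) (q i),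
    ?_, fun j ↦ ?_⟩
  · exact add_mem (Submodule.sum_mem _ fun i _ ↦ wedge_mem_skewAdjointSubmodule _ _)
      (Submodule.smul_mem _ _ (Submodule.sum_mem _ fun i _ ↦ Submodule.sum_mem _ fun k _ ↦
        Submodule.smul_mem _ _ (wedge_mem_skewAdjointSubmodule _ _)))
  · have hskew : ∑ k, ⟪t j, p k⟫_ℝ • q k = -∑ k, ⟪t k, p j⟫_ℝ • q k := by
      rw [← Finset.sum_neg_distrib]
      refine Finset.sum_congr rfl fun k _ ↦ ?_
      rw [eq_neg_of_add_eq_zero_left (ht j k), neg_smul]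
    simp only [LinearMap.add_apply, LinearMap.sum_apply, LinearMap.smul_apply, wedge_apply, hq,
      ite_smul, zero_smul, one_smul, smul_sub, Finset.sum_sub_distrib, smul_ite, smul_zero,
      Finset.sum_ite_irrel, Finset.sum_const_zero, Finset.sum_ite_eq', Finset.mem_univ, if_true,
      hskew]
    module

end InnerProductSpace

end InnerProduct

/-- Infinitesimal rigidity of a triangle. -/
theorem triangle_rigidity
    (p₁ p₂ p₃ t₁ t₂ t₃ : EuclideanSpace ℝ (Fin 3))
    (hcol : ¬ ∃ v : EuclideanSpace ℝ (Fin 3),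
      (∃ c : ℝ, p₁ = c • v) ∧ (∃ c : ℝ, p₂ = c • v) ∧ (∃ c : ℝ, p₃ = c • v))
    (hsum : p₁ + p₂ + p₃ = 0)
    (ht₁ : ⟪t₁, p₁⟫_ℝ = 0) (ht₂ : ⟪t₂, p₂⟫_ℝ = 0) (ht₃ : ⟪t₃, p₃⟫_ℝ = 0)
    (htsum : t₁ + t₂ + t₃ = 0) :
    ∃ a : EuclideanSpace ℝ (Fin 3) →ₗ[ℝ] EuclideanSpace ℝ (Fin 3),
      (∀ v w : EuclideanSpace ℝ (Fin 3), ⟪a v, w⟫_ℝ + ⟪v, a w⟫_ℝ = 0) ∧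
      a p₁ = t₁ ∧ a p₂ = t₂ ∧ a p₃ = t₃ := by
  have hp₃ : p₃ = -(p₁ + p₂) := eq_neg_of_add_eq_zero_right hsum
  have ht₃' : t₃ = -(t₁ + t₂) := eq_neg_of_add_eq_zero_right htsum
  have hp : LinearIndependent ℝ ![p₁, p₂] := by
    by_contra h
    obtain ⟨v, ⟨c₁, hc₁⟩, c₂, hc₂⟩ := exists_smul_eq_of_not_linearIndependent_pair h
    exact hcol ⟨v, ⟨c₁, hc₁⟩, ⟨c₂, hc₂⟩, -(c₁ + c₂), by rw [hp₃, hc₁, hc₂]; module⟩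
  have ht₁₂ : ⟪t₁, p₂⟫_ℝ + ⟪t₂, p₁⟫_ℝ = 0 := by
    rw [hp₃, ht₃', inner_neg_neg, inner_add_left, inner_add_right, inner_add_right] at ht₃
    linarith
  obtain ⟨a, ha, hap⟩ :=
    InnerProductSpace.exists_mem_skewAdjointSubmodule_apply_eq (t := ![t₁, t₂]) hp <| by
      simp [Fin.forall_fin_two, ht₁, ht₂, ht₁₂, add_comm ⟪t₂, p₁⟫_ℝ]
  have hap₁ : a p₁ = t₁ := hap 0
  have hap₂ : a p₂ = t₂ := hap 1
  refine ⟨a, InnerProductSpace.mem_skewAdjointSubmodule_innerₗ_iff.mp ha, hap₁, hap₂, ?_⟩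
  rw [hp₃, ht₃', map_neg, map_add, hap₁, hap₂]
end

section
/- Let p : Fin k → ℝ³ satisfy ⟨p i, p i⟩ = (ℓ i)² for all i (with ℓ i > 0) and ∑ i, p i = 0, and suppose the vectors p i are not all collinear. Then the system of linear equations in unknowns t : Fin k → ℝ³ given by ⟨t i, p i⟩ = 0 for all i together with ∑ i, t i = 0 has solution space of dimension exactly 2k − 3. -/
/-!
The tangent space is the kernel of `t ↦ ((⟪p i, t i⟫)ᵢ, ∑ i, t i)`, a map from `ℝ^{3k}` to
`ℝ^k × ℝ³`. This map is onto: the first component is hit by moving each edge along itself, and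
the closing vector can then be corrected by moving two independent edges `p i`, `p j`
orthogonally to themselves, because `(ℝ p i)ᗮ + (ℝ p j)ᗮ = ℝ³`. Rank–nullity gives
`3k - (k + 3) = 2k - 3`.
-/

open scoped InnerProductSpace

section

variable {E : Type*} [NormedAddCommGroup E] [InnerProductSpace ℝ E]

theorem Submodule.orthogonal_sup_orthogonal_eq_top [FiniteDimensional ℝ E]
    {K L : Submodule ℝ E} (h : Disjoint K L) : Kᗮ ⊔ Lᗮ = ⊤ := by
  rw [← Submodule.orthogonal_eq_bot_iff, ← Submodule.inf_orthogonal,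
    Submodule.orthogonal_orthogonal, Submodule.orthogonal_orthogonal, h.eq_bot]

theorem exists_disjoint_span_singleton_of_not_collinear {ι : Type*} {p : ι → E}
    (hcol : ¬ ∃ v : E, ∀ i, ∃ c : ℝ, p i = c • v) :
    ∃ i j, Disjoint (ℝ ∙ p i) (ℝ ∙ p j) := by
  obtain ⟨i⟩ : Nonempty ι := by
    by_contra hι
    exact hcol ⟨0, fun i => (hι ⟨i⟩).elim⟩
  by_contra! h
  refine hcol ⟨p i, fun j => ?_⟩
  obtain ⟨c, hc⟩ := Submodule.mem_span_singleton.mp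
    (not_imp_comm.mp Submodule.disjoint_span_singleton_of_notMem (h i j))
  exact ⟨c, hc.symm⟩

variable {ι : Type*} [Fintype ι] (p : ι → E)

noncomputable def polygonConstraints : (ι → E) →ₗ[ℝ] (ι → ℝ) × E :=
  (LinearMap.pi fun i => innerₛₗ ℝ (p i) ∘ₗ LinearMap.proj i).prod (∑ i, LinearMap.proj i)

@[simp]
theorem polygonConstraints_apply (t : ι → E) :
    polygonConstraints p t = (fun i => ⟪p i, t i⟫_ℝ, ∑ i, t i) := by
  ext <;> simp [polygonConstraints]

theorem mem_ker_polygonConstraints (t : ι → E) :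
    t ∈ LinearMap.ker (polygonConstraints p) ↔ (∀ i, ⟪t i, p i⟫_ℝ = 0) ∧ ∑ i, t i = 0 := by
  simp [funext_iff, real_inner_comm]

theorem exists_sum_eq_of_inner_eq_zero {i j : ι} (hij : (ℝ ∙ p i)ᗮ ⊔ (ℝ ∙ p j)ᗮ = ⊤) (w : E) :
    ∃ t : ι → E, (∀ m, ⟪p m, t m⟫_ℝ = 0) ∧ ∑ m, t m = w := by
  classical
  obtain ⟨x, hx, y, hy, rfl⟩ := Submodule.mem_sup.mp (hij ▸ Submodule.mem_top : w ∈ _)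
  rw [Submodule.mem_orthogonal_singleton_iff_inner_right] at hx hy
  refine ⟨Pi.single i x + Pi.single j y, fun m => ?_, by simp [Finset.sum_add_distrib]⟩
  rcases eq_or_ne m i with rfl | hmi <;> rcases eq_or_ne m j with rfl | hmj <;>
    simp [inner_add_right, *]

theorem polygonConstraints_surjective (hp : ∀ i, p i ≠ 0) {i j : ι}
    (hij : (ℝ ∙ p i)ᗮ ⊔ (ℝ ∙ p j)ᗮ = ⊤) : Function.Surjective (polygonConstraints p) := by
  rintro ⟨a, w⟩
  let b : ι → E := fun m => (a m / ‖p m‖ ^ 2) • p m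
  have hb : ∀ m, ⟪p m, b m⟫_ℝ = a m := fun m => by
    simp [b, inner_smul_right, hp m]
  obtain ⟨t, ht, hsum⟩ := exists_sum_eq_of_inner_eq_zero p hij (w - ∑ m, b m)
  refine ⟨b + t, ?_⟩
  simp [inner_add_right, hb, ht, Finset.sum_add_distrib, hsum]

theorem finrank_ker_polygonConstraints [FiniteDimensional ℝ E] (hp : ∀ i, p i ≠ 0) {i j : ι}
    (hij : (ℝ ∙ p i)ᗮ ⊔ (ℝ ∙ p j)ᗮ = ⊤) :
    Module.finrank ℝ (LinearMap.ker (polygonConstraints p)) + Fintype.card ι +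
      Module.finrank ℝ E = Fintype.card ι * Module.finrank ℝ E := by
  have h := LinearMap.finrank_range_add_finrank_ker (polygonConstraints p)
  rw [LinearMap.range_eq_top.mpr (polygonConstraints_surjective p hp hij), finrank_top,
    Module.finrank_prod, Module.finrank_pi, Module.finrank_pi_fintype] at h
  simp only [Finset.sum_const, Finset.card_univ, smul_eq_mul] at h
  omega

end

theorem polygon_tangent_dim_smooth_general (k : ℕ)
    (p : Fin k → EuclideanSpace ℝ (Fin 3)) (ℓ : Fin k → ℝ)
    (hℓ : ∀ i, 0 < ℓ i)
    (hlen : ∀ i, ⟪p i, p i⟫_ℝ = (ℓ i) ^ 2)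
    (hcol : ¬ ∃ v : EuclideanSpace ℝ (Fin 3), ∀ i, ∃ c : ℝ, p i = c • v)
    (T : Submodule ℝ (Fin k → EuclideanSpace ℝ (Fin 3)))
    (hT : ∀ t, t ∈ T ↔ ((∀ i, ⟪t i, p i⟫_ℝ = 0) ∧ ∑ i, t i = 0)) :
    Module.finrank ℝ T = 2 * k - 3 := by
  have hp : ∀ i, p i ≠ 0 := fun i hi =>
    (pow_pos (hℓ i) 2).ne (by simpa [hi] using hlen i)
  obtain ⟨i, j, hij⟩ := exists_disjoint_span_singleton_of_not_collinear hcol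
  have hT' : T = LinearMap.ker (polygonConstraints p) := by
    ext t
    rw [hT, mem_ker_polygonConstraints]
  have h := finrank_ker_polygonConstraints p hp (Submodule.orthogonal_sup_orthogonal_eq_top hij)
  rw [← hT', Fintype.card_fin, finrank_euclideanSpace_fin] at h
  omega

/-- The tangent space to the polygon space at a smooth (non-collinear) point
has dimension `2k - 3`. -/
theorem polygon_tangent_dim_smooth (k : ℕ)
    (p : Fin k → EuclideanSpace ℝ (Fin 3)) (ℓ : Fin k → ℝ)
    (hℓ : ∀ i, 0 < ℓ i)
    (hlen : ∀ i, ⟪p i, p i⟫_ℝ = (ℓ i) ^ 2)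
    (hsum : ∑ i, p i = 0)
    (hcol : ¬ ∃ v : EuclideanSpace ℝ (Fin 3), ∀ i, ∃ c : ℝ, p i = c • v)
    (T : Submodule ℝ (Fin k → EuclideanSpace ℝ (Fin 3)))
    (hT : ∀ t, t ∈ T ↔ ((∀ i, ⟪t i, p i⟫_ℝ = 0) ∧ ∑ i, t i = 0)) :
    Module.finrank ℝ T = 2 * k - 3 :=
  polygon_tangent_dim_smooth_general k p ℓ hℓ hlen hcol T hT
end

section
/- Let p : Fin k → ℝ³ satisfy ⟨p i, p i⟩ = (ℓ i)² with ℓ i > 0 for all i and ∑ i, p i = 0, and suppose all vectors p i are collinear (all scalar multiples of a common nonzero vector). Then the solution space of the linear system ⟨t i, p i⟩ = 0 for all i and ∑ i, t i = 0 (in unknowns t : Fin k → ℝ³) has dimension exactly 2k − 2. -/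
open scoped InnerProductSpace

/-- The tangent space to the polygon space at a singular (collinear) point
has dimension `2k - 2`. -/
theorem polygon_tangent_dim_singular (k : ℕ)
    (p : Fin k → EuclideanSpace ℝ (Fin 3)) (ℓ : Fin k → ℝ)
    (hℓ : ∀ i, 0 < ℓ i)
    (hlen : ∀ i, ⟪p i, p i⟫_ℝ = (ℓ i) ^ 2)
    (hsum : ∑ i, p i = 0)
    (hcol : ∃ v : EuclideanSpace ℝ (Fin 3), v ≠ 0 ∧ ∀ i, ∃ c : ℝ, p i = c • v)
    (T : Submodule ℝ (Fin k → EuclideanSpace ℝ (Fin 3)))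
    (hT : ∀ t, t ∈ T ↔ ((∀ i, ⟪t i, p i⟫_ℝ = 0) ∧ ∑ i, t i = 0)) :
    Module.finrank ℝ T = 2 * k - 2 := by
  obtain ⟨v, hv, hc⟩ := hcol
  -- each p i is nonzero
  have hpne : ∀ i, p i ≠ 0 := by
    intro i h
    have := hlen i
    rw [h, inner_zero_left] at this
    exact absurd this.symm (ne_of_gt (pow_pos (hℓ i) 2))
  -- orthogonality to p i ↔ orthogonality to v
  have hkey : ∀ i (x : EuclideanSpace ℝ (Fin 3)), ⟪x, p i⟫_ℝ = 0 ↔ ⟪x, v⟫_ℝ = 0 := by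
    intro i x
    obtain ⟨c, hci⟩ := hc i
    have hcne : c ≠ 0 := by
      rintro rfl; exact hpne i (by simpa using hci)
    rw [hci, real_inner_smul_right]
    constructor
    · intro h; exact (mul_eq_zero.mp h).resolve_left hcne
    · intro h; rw [h, mul_zero]
  set W : Submodule ℝ (EuclideanSpace ℝ (Fin 3)) := (ℝ ∙ v)ᗮ with hWdef
  have memW : ∀ (x : EuclideanSpace ℝ (Fin 3)), x ∈ W ↔ ⟪x, v⟫_ℝ = 0 := by
    intro x; exact Submodule.mem_orthogonal_singleton_iff_inner_left
  have hWrank : Module.finrank ℝ W = 2 := by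
    have h1 := Submodule.finrank_add_finrank_orthogonal (K := (ℝ ∙ v))
    rw [finrank_span_singleton hv, finrank_euclideanSpace_fin, ← hWdef] at h1
    omega
  -- the sum map on (Fin k → W)
  set S : (Fin k → W) →ₗ[ℝ] W := ∑ i : Fin k, LinearMap.proj i with hSdef
  have hSapp : ∀ u : Fin k → W, S u = ∑ i, u i := by
    intro u; simp [hSdef]
  -- the inclusion (Fin k → W) → (Fin k → E)
  set f : (Fin k → W) →ₗ[ℝ] (Fin k → EuclideanSpace ℝ (Fin 3)) :=
    LinearMap.pi (fun i => W.subtype.comp (LinearMap.proj i)) with hfdef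
  have hfapp : ∀ u : Fin k → W, ∀ i, f u i = (u i : EuclideanSpace ℝ (Fin 3)) := by
    intro u i; rfl
  have hfinj : Function.Injective f := by
    intro a b hab
    funext i
    have := congrFun hab i
    exact Subtype.ext this
  have hmap : Submodule.map f (LinearMap.ker S) = T := by
    ext t
    rw [Submodule.mem_map, hT]
    constructor
    · rintro ⟨u, hu, rfl⟩
      constructor
      · intro i
        rw [hfapp, hkey i]
        exact (memW _).mp (u i).2
      · have h0 := LinearMap.mem_ker.mp hu
        rw [hSapp] at h0
        have := congrArg Subtype.val h0
        calc ∑ i, f u i = ((∑ i, u i : W) : EuclideanSpace ℝ (Fin 3)) := by push_cast; rfl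
          _ = 0 := this
    · rintro ⟨h1, h2⟩
      refine ⟨fun i => ⟨t i, (memW _).mpr ((hkey i _).mp (h1 i))⟩, ?_, ?_⟩
      · rw [LinearMap.mem_ker, hSapp]
        apply Subtype.ext
        push_cast
        exact h2
      · funext i; rfl
  have hTr : Module.finrank ℝ T = Module.finrank ℝ (LinearMap.ker S) := by
    rw [← hmap]
    exact (Submodule.equivMapOfInjective f hfinj (LinearMap.ker S)).symm.finrank_eq
  rw [hTr]
  rcases Nat.eq_zero_or_pos k with hk0 | hkpos
  · subst hk0
    have h0 : Module.finrank ℝ (Fin 0 → W) = 0 := Module.finrank_zero_of_subsingleton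
    have hle := Submodule.finrank_le (LinearMap.ker S)
    omega
  · -- k ≥ 1 : S is surjective
    have hsurj : LinearMap.range S = ⊤ := by
      rw [LinearMap.range_eq_top]
      intro w
      refine ⟨Pi.single ⟨0, hkpos⟩ w, ?_⟩
      rw [hSapp]
      simp [Finset.sum_pi_single]
    have hrn := LinearMap.finrank_range_add_finrank_ker S
    rw [hsurj] at hrn
    have hdom : Module.finrank ℝ (Fin k → W) = k * 2 := by
      rw [Module.finrank_pi_fintype]; simp [hWrank]
    have htop : Module.finrank ℝ (⊤ : Submodule ℝ W) = 2 := by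
      rw [finrank_top]; exact hWrank
    -- k = 1 is impossible
    rcases Nat.lt_or_ge k 2 with hk1 | hk2
    · interval_cases k
      exfalso
      have h1 : p ⟨0, by norm_num⟩ = 0 := by
        have := hsum
        simpa [Fin.sum_univ_one] using this
      exact hpne _ h1
    · omega
end

section
/- Let p, t : Fin k → ℝ³ satisfy ⟨p j, p j⟩ = (ℓ j)² with ℓ j > 0, ⟨t j, p j⟩ = 0 for all j, ∑ j, p j = 0 and ∑ j, t j = 0. Then for any skew-symmetric linear map a : ℝ³ → ℝ³, the sum ∑_{j} det[t j, a (p j), p j] / (ℓ j)² equals 0, where det[u, v, w] denotes the determinant of the 3×3 matrix with columns u, v, w. -/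
open scoped InnerProductSpace

/-- Orbit directions of the `SO(3)`-action lie in the kernel of the
Kapovich–Millson form: `∑_j det[t j, a (p j), p j] / ℓ j ² = 0`. -/
theorem orbit_in_kernel_of_KM_form (k : ℕ)
    (p t : Fin k → EuclideanSpace ℝ (Fin 3)) (ℓ : Fin k → ℝ)
    (hℓ : ∀ j, 0 < ℓ j)
    (hlen : ∀ j, ⟪p j, p j⟫_ℝ = (ℓ j) ^ 2)
    (horth : ∀ j, ⟪t j, p j⟫_ℝ = 0)
    (hpsum : ∑ j, p j = 0)
    (htsum : ∑ j, t j = 0)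
    (a : EuclideanSpace ℝ (Fin 3) →ₗ[ℝ] EuclideanSpace ℝ (Fin 3))
    (ha : ∀ v w : EuclideanSpace ℝ (Fin 3), ⟪a v, w⟫_ℝ + ⟪v, a w⟫_ℝ = 0) :
    ∑ j, Matrix.det (Matrix.transpose (Matrix.of ![(t j : Fin 3 → ℝ),
        (a (p j) : Fin 3 → ℝ), (p j : Fin 3 → ℝ)])) / (ℓ j) ^ 2 = 0 := by
  classical
  set e : Fin 3 → EuclideanSpace ℝ (Fin 3) := fun i => EuclideanSpace.single i (1 : ℝ) with he
  set A : Fin 3 → Fin 3 → ℝ := fun i m => a (e m) i with hA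
  -- skew-symmetry of entries
  have hskew : ∀ i m : Fin 3, A i m = - A m i := by
    intro i m
    have h := ha (e m) (e i)
    have h1 : ⟪a (e m), e i⟫_ℝ = A i m := by
      simp [he, hA, EuclideanSpace.inner_single_right]
    have h2 : ⟪e m, a (e i)⟫_ℝ = A m i := by
      simp [he, hA, EuclideanSpace.inner_single_left]
    rw [h1, h2] at h
    linarith
  -- decomposition of a vector
  have hdecomp : ∀ v : EuclideanSpace ℝ (Fin 3),
      v = v 0 • e 0 + v 1 • e 1 + v 2 • e 2 := by
    intro v
    ext i
    fin_cases i <;>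
      simp [he, EuclideanSpace.single_apply]
  have hav : ∀ (v : EuclideanSpace ℝ (Fin 3)) (i : Fin 3),
      a v i = A i 0 * v 0 + A i 1 * v 1 + A i 2 * v 2 := by
    intro v i
    conv_lhs => rw [hdecomp v]
    simp [hA, mul_comm]
  have hinner : ∀ u v : EuclideanSpace ℝ (Fin 3),
      ⟪u, v⟫_ℝ = u 0 * v 0 + u 1 * v 1 + u 2 * v 2 := by
    intro u v
    simp [PiLp.inner_apply, Fin.sum_univ_three, mul_comm]
  -- the key per-term identity
  have hterm : ∀ j, Matrix.det (Matrix.transpose (Matrix.of ![(t j : Fin 3 → ℝ),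
        (a (p j) : Fin 3 → ℝ), (p j : Fin 3 → ℝ)])) / (ℓ j) ^ 2
      = -(t j 0 * A 2 1 + t j 1 * A 0 2 + t j 2 * A 1 0) := by
    intro j
    have hl : (ℓ j) ^ 2 ≠ 0 := pow_ne_zero _ (ne_of_gt (hℓ j))
    rw [div_eq_iff hl]
    rw [Matrix.det_transpose, Matrix.det_fin_three]
    have hlen' := hlen j; rw [hinner] at hlen'
    have horth' := horth j; rw [hinner] at horth'
    have h00 := hskew 0 0
    have h11 := hskew 1 1
    have h22 := hskew 2 2
    have h01 := hskew 0 1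
    have h02 := hskew 0 2
    have h12 := hskew 1 2
    simp only [Matrix.of_apply, Matrix.cons_val', Matrix.cons_val_zero, Matrix.cons_val_one,
      Matrix.head_cons, Matrix.empty_val', Matrix.cons_val_fin_one, Matrix.head_fin_const,
      Matrix.cons_val_two, Matrix.tail_cons]
    rw [hav (p j) 0, hav (p j) 1, hav (p j) 2]
    have e0 : A 0 0 = 0 := by linarith
    have e1 : A 1 1 = 0 := by linarith
    have e2 : A 2 2 = 0 := by linarith
    rw [e0, e1, e2, h01, h02, h12]
    linear_combination -(t j 0 * A 2 1 - t j 1 * A 2 0 + t j 2 * A 1 0) * hlen' +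
      (p j 0 * A 2 1 - p j 1 * A 2 0 + p j 2 * A 1 0) * horth'
  have ht : ∀ i : Fin 3, ∑ j, t j i = 0 := by
    intro i
    have h := congrArg (EuclideanSpace.proj i) htsum
    simpa [map_sum] using h
  calc ∑ j, Matrix.det (Matrix.transpose (Matrix.of ![(t j : Fin 3 → ℝ),
        (a (p j) : Fin 3 → ℝ), (p j : Fin 3 → ℝ)])) / (ℓ j) ^ 2
      = ∑ j, -(t j 0 * A 2 1 + t j 1 * A 0 2 + t j 2 * A 1 0) :=
        Finset.sum_congr rfl fun j _ => hterm j
    _ = -((∑ j, t j 0) * A 2 1 + (∑ j, t j 1) * A 0 2 + (∑ j, t j 2) * A 1 0) := by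
        simp [Finset.sum_add_distrib, Finset.sum_mul]
    _ = 0 := by rw [ht 0, ht 1, ht 2]; ring
end

section
/- Let p : Fin k → ℝ³ satisfy ⟨p j, p j⟩ = (ℓ j)² with ℓ j > 0, ∑ j, p j = 0, and suppose the p j are not all collinear. Then the kernel of the skew-symmetric form ω_p(t, t') = ∑_j det[t j, t' j, p j]/(ℓ j)² restricted to the tangent space T = {t : ⟨t j, p j⟩ = 0 ∀j, ∑ t j = 0} equals exactly the set {j ↦ a (p j) : a skew-symmetric linear map on ℝ³}, which is 3-dimensional. -/
open scoped InnerProductSpace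

/-!
Write `×` for the cross product. Expanding the determinant as a triple product gives
`ω_p(t, t') = ∑ j ⟪x j, t' j⟫` with `x j = (p j × t j) / ℓ j ²`. The tangent space `T` is cut out
by the constraints `⟪t' j, p j⟫ = 0` and `∑ j, t' j = 0`, so by linear duality (Lagrange
multipliers) `t` lies in the kernel iff `x j = c j • p j + v` for some scalars `c j` and one vector
`v`. Since `t j ⊥ p j`, the identity `(p × t) × p = |p|² t - ⟪t, p⟫ p` inverts `t j ↦ x j`, and
this says exactly `t j = v × p j`. Skew-symmetric maps of `ℝ³` are the maps `w ↦ v × w`, so that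
is the orbit direction of the rotation with angular velocity `v`; non-collinearity makes
`v ↦ (v × p j)_j` injective, whence dimension 3.
-/

open WithLp Matrix

local notation "𝔼³" => EuclideanSpace ℝ (Fin 3)

section CrossProduct

noncomputable def euclideanCross : 𝔼³ →ₗ[ℝ] 𝔼³ →ₗ[ℝ] 𝔼³ :=
  (crossProduct.compl₁₂ (WithLp.linearEquiv 2 ℝ (Fin 3 → ℝ)).toLinearMap
    (WithLp.linearEquiv 2 ℝ (Fin 3 → ℝ)).toLinearMap).compr₂
    (WithLp.linearEquiv 2 ℝ (Fin 3 → ℝ)).symm.toLinearMap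

lemma ofLp_euclideanCross (u v : 𝔼³) :
    ofLp (euclideanCross u v) = ofLp u ⨯₃ ofLp v := rfl

lemma real_inner_eq_dotProduct (x y : 𝔼³) : ⟪x, y⟫_ℝ = ofLp x ⬝ᵥ ofLp y := by
  rw [EuclideanSpace.inner_eq_star_dotProduct, star_trivial, dotProduct_comm]

lemma euclideanCross_eq_zero_iff {u v : 𝔼³} (hu : u ≠ 0) :
    euclideanCross u v = 0 ↔ ∃ c : ℝ, v = c • u := by
  have hu' : ofLp u ≠ 0 := by simpa using hu
  have key := (LinearIndependent.pair_iff' (K := ℝ) hu' (y := ofLp v)).not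
  rw [← crossProduct_ne_zero_iff_linearIndependent, not_not] at key
  rw [← (ofLp_injective 2).eq_iff, ofLp_euclideanCross, ofLp_zero, key, not_forall_not]
  exact exists_congr fun c => by
    rw [eq_comm, ← ofLp_smul, (ofLp_injective 2).eq_iff]

lemma euclideanCross_self (u : 𝔼³) : euclideanCross u u = 0 :=
  ofLp_injective 2 (by rw [ofLp_euclideanCross, cross_self, ofLp_zero])

lemma inner_euclideanCross_self (u v : 𝔼³) : ⟪euclideanCross u v, v⟫_ℝ = 0 := by
  rw [real_inner_eq_dotProduct, dotProduct_comm, ofLp_euclideanCross, dot_cross_self]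

lemma inner_euclideanCross_add_inner_euclideanCross (u v w : 𝔼³) :
    ⟪euclideanCross u v, w⟫_ℝ + ⟪v, euclideanCross u w⟫_ℝ = 0 := by
  simp only [real_inner_eq_dotProduct, ofLp_euclideanCross]
  rw [dotProduct_comm, triple_product_permutation (ofLp w), triple_product_permutation (ofLp v),
    ← dotProduct_add, cross_anticomm', dotProduct_zero]

lemma det_transpose_eq_inner_euclideanCross (t t' q : 𝔼³) :
    (Matrix.of ![ofLp t, ofLp t', ofLp q])ᵀ.det = ⟪euclideanCross q t, t'⟫_ℝ := by
  rw [det_transpose, real_inner_eq_dotProduct, dotProduct_comm, ofLp_euclideanCross,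
    ← triple_product_permutation, triple_product_eq_det]
  rfl

lemma euclideanCross_euclideanCross_self (u v : 𝔼³) :
    euclideanCross (euclideanCross u v) u = ⟪u, u⟫_ℝ • v - ⟪v, u⟫_ℝ • u := by
  apply ofLp_injective 2
  simp only [ofLp_euclideanCross, cross_cross_eq_smul_sub_smul, real_inner_eq_dotProduct,
    ofLp_sub, ofLp_smul]

lemma euclideanCross_self_euclideanCross (u v : 𝔼³) :
    euclideanCross u (euclideanCross v u) = ⟪u, u⟫_ℝ • v - ⟪v, u⟫_ℝ • u := by
  apply ofLp_injective 2
  simp only [ofLp_euclideanCross, cross_cross_eq_smul_sub_smul', real_inner_eq_dotProduct,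
    ofLp_sub, ofLp_smul]

lemma exists_eq_euclideanCross_of_skew (a : 𝔼³ →ₗ[ℝ] 𝔼³)
    (ha : ∀ v w, ⟪a v, w⟫_ℝ + ⟪v, a w⟫_ℝ = 0) : ∃ x, a = euclideanCross x := by
  let e : Fin 3 → 𝔼³ := fun i => EuclideanSpace.single i 1
  have hskew : ∀ i j, a (e i) j = - a (e j) i := fun i j => by
    have := ha (e i) (e j)
    simp only [e, EuclideanSpace.inner_single_right, EuclideanSpace.inner_single_left,
      Real.ringHom_apply, one_mul] at this
    linarith
  refine ⟨toLp 2 ![a (e 1) 2, a (e 2) 0, a (e 0) 1],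
    (EuclideanSpace.basisFun (Fin 3) ℝ).toBasis.ext fun i => ?_⟩
  ext m
  fin_cases i <;> fin_cases m <;> simp [e, euclideanCross, cross_apply] <;>
    linarith [hskew 0 0, hskew 1 1, hskew 2 2, hskew 0 1, hskew 0 2, hskew 1 2]

/-- For `t ⊥ q`, the map `t ↦ (q × t) / |q|²` inverts `x ↦ x × q`, and it sends `v × q` to
`v` up to a multiple of `q`. -/
lemma eq_euclideanCross_iff {q : 𝔼³} (hq : q ≠ 0) (t v : 𝔼³) :
    t = euclideanCross v q ↔
      ⟪t, q⟫_ℝ = 0 ∧ ∃ c : ℝ, (⟪q, q⟫_ℝ)⁻¹ • euclideanCross q t = c • q + v := by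
  have hqq : ⟪q, q⟫_ℝ ≠ 0 := inner_self_ne_zero.mpr hq
  constructor
  · rintro rfl
    refine ⟨inner_euclideanCross_self v q, -((⟪q, q⟫_ℝ)⁻¹ * ⟪v, q⟫_ℝ), ?_⟩
    rw [euclideanCross_self_euclideanCross, smul_sub, smul_smul, smul_smul,
      inv_mul_cancel₀ hqq, one_smul, neg_smul, neg_add_eq_sub]
  · rintro ⟨htq, c, hc⟩
    calc t = (⟪q, q⟫_ℝ)⁻¹ • euclideanCross (euclideanCross q t) q := by
          rw [euclideanCross_euclideanCross_self, htq, zero_smul, sub_zero, smul_smul,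
            inv_mul_cancel₀ hqq, one_smul]
      _ = euclideanCross (c • q + v) q := by rw [← hc, map_smul, LinearMap.smul_apply]
      _ = euclideanCross v q := by
          rw [map_add, LinearMap.add_apply, map_smul, LinearMap.smul_apply, euclideanCross_self,
            smul_zero, zero_add]

end CrossProduct

section LagrangeMultipliers

variable {ι E : Type*} [Fintype ι] [NormedAddCommGroup E] [InnerProductSpace ℝ E]

lemma exists_eq_smul_add_of_forall_sum_inner_eq_zero {p x : ι → E}
    (h : ∀ t : ι → E, (∀ j, ⟪t j, p j⟫_ℝ = 0) → ∑ j, t j = 0 → ∑ j, ⟪x j, t j⟫_ℝ = 0) :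
    ∃ (c : ι → ℝ) (v : E), ∀ j, x j = c j • p j + v := by
  classical
  let Φ : (ι → E) →ₗ[ℝ] (ι → ℝ) × E :=
    (LinearMap.pi fun j => innerₛₗ ℝ (p j) ∘ₗ LinearMap.proj j).prod (∑ j, LinearMap.proj j)
  let f : Module.Dual ℝ (ι → E) := ∑ j, innerₛₗ ℝ (x j) ∘ₗ LinearMap.proj j
  -- `f` vanishes on `ker Φ`, so it factors through `Φ`; `g` carries the Lagrange multipliers.
  have hf : f ∈ LinearMap.range Φ.dualMap := by
    rw [LinearMap.range_dualMap_eq_dualAnnihilator_ker, Submodule.mem_dualAnnihilator]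
    intro t ht
    simp only [Φ, LinearMap.ker_prod, Submodule.mem_inf, LinearMap.mem_ker, funext_iff,
      LinearMap.pi_apply, LinearMap.coe_comp, coe_innerₛₗ_apply, LinearMap.coe_proj,
      Function.comp_apply, Function.eval, Pi.zero_apply, LinearMap.coe_sum,
      Finset.sum_apply] at ht
    simpa [f] using h t (fun j => by rw [real_inner_comm]; exact ht.1 j) ht.2
  obtain ⟨g, hg⟩ := hf
  have hx : ∀ j w, ⟪x j, w⟫_ℝ = g (Pi.single j 1, 0) * ⟪p j, w⟫_ℝ + g (0, w) := by
    intro j w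
    have hΦ : Φ (Pi.single j w) = ⟪p j, w⟫_ℝ • (Pi.single j 1, 0) + (0, w) := by
      ext i : 2
      · by_cases hij : i = j
        · subst hij; simp [Φ]
        · simp [Φ, hij]
      · simp [Φ]
    have hfj : f (Pi.single j w) = ⟪x j, w⟫_ℝ := by simp [f, Pi.single_apply, apply_ite]
    rw [← hfj, ← hg, LinearMap.dualMap_apply, hΦ, map_add, map_smul, smul_eq_mul, mul_comm]
  have hv : ∀ i j, x i - g (Pi.single i 1, 0) • p i = x j - g (Pi.single j 1, 0) • p j :=
    fun i j => ext_inner_right ℝ fun w => by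
      rw [inner_sub_left, inner_sub_left, hx, hx, real_inner_smul_left, real_inner_smul_left]
      ring
  rcases isEmpty_or_nonempty ι with hι | ⟨⟨i₀⟩⟩
  · exact ⟨0, 0, isEmptyElim⟩
  · exact ⟨fun j => g (Pi.single j 1, 0), x i₀ - g (Pi.single i₀ 1, 0) • p i₀,
      fun j => by rw [hv i₀ j, add_sub_cancel]⟩

lemma forall_sum_inner_eq_zero_iff (p x : ι → E) :
    (∀ t : ι → E, (∀ j, ⟪t j, p j⟫_ℝ = 0) → ∑ j, t j = 0 → ∑ j, ⟪x j, t j⟫_ℝ = 0) ↔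
      ∃ (c : ι → ℝ) (v : E), ∀ j, x j = c j • p j + v := by
  refine ⟨exists_eq_smul_add_of_forall_sum_inner_eq_zero, ?_⟩
  rintro ⟨c, v, hx⟩ t htp hts
  have hpt : ∀ j, ⟪p j, t j⟫_ℝ = 0 := fun j => by rw [real_inner_comm, htp]
  simp_rw [hx, inner_add_left, real_inner_smul_left, hpt, mul_zero, zero_add, ← inner_sum, hts,
    inner_zero_right]

end LagrangeMultipliers

section InfinitesimalRotation

variable {ι : Type*}

noncomputable def infinitesimalRotation (p : ι → 𝔼³) : 𝔼³ →ₗ[ℝ] ι → 𝔼³ :=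
  LinearMap.pi fun j => euclideanCross.flip (p j)

lemma mem_range_infinitesimalRotation (p t : ι → 𝔼³) :
    t ∈ LinearMap.range (infinitesimalRotation p) ↔ ∃ v, ∀ j, t j = euclideanCross v (p j) := by
  simp [infinitesimalRotation, funext_iff, eq_comm]

lemma exists_skew_apply_eq_iff (p t : ι → 𝔼³) :
    (∃ a : 𝔼³ →ₗ[ℝ] 𝔼³, (∀ v w, ⟪a v, w⟫_ℝ + ⟪v, a w⟫_ℝ = 0) ∧ ∀ j, t j = a (p j)) ↔
      t ∈ LinearMap.range (infinitesimalRotation p) := by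
  rw [mem_range_infinitesimalRotation]
  constructor
  · rintro ⟨a, ha, hat⟩
    obtain ⟨v, rfl⟩ := exists_eq_euclideanCross_of_skew a ha
    exact ⟨v, hat⟩
  · rintro ⟨v, hv⟩
    exact ⟨euclideanCross v, inner_euclideanCross_add_inner_euclideanCross v, hv⟩

lemma injective_infinitesimalRotation {p : ι → 𝔼³}
    (hp : ¬ ∃ v : 𝔼³, ∀ j, ∃ c : ℝ, p j = c • v) :
    Function.Injective (infinitesimalRotation p) := by
  rw [← LinearMap.ker_eq_bot, Submodule.eq_bot_iff]
  intro v hv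
  by_contra hv0
  exact hp ⟨v, fun j => (euclideanCross_eq_zero_iff hv0).mp (congr_fun hv j)⟩

end InfinitesimalRotation

/-- At a non-collinear point of the polygon space, the kernel of the
Kapovich–Millson form on the tangent space is exactly the tangent space to the
`SO(3)`-orbit, which is 3-dimensional. -/
theorem KM_form_kernel_eq_orbit_smooth (k : ℕ)
    (p : Fin k → EuclideanSpace ℝ (Fin 3)) (ℓ : Fin k → ℝ)
    (hℓ : ∀ j, 0 < ℓ j)
    (hlen : ∀ j, ⟪p j, p j⟫_ℝ = (ℓ j) ^ 2)
    (hsum : ∑ j, p j = 0)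
    (hcol : ¬ ∃ v : EuclideanSpace ℝ (Fin 3), ∀ j, ∃ c : ℝ, p j = c • v)
    (T : Submodule ℝ (Fin k → EuclideanSpace ℝ (Fin 3)))
    (hT : ∀ t, t ∈ T ↔ ((∀ j, ⟪t j, p j⟫_ℝ = 0) ∧ ∑ j, t j = 0))
    (O : Submodule ℝ (Fin k → EuclideanSpace ℝ (Fin 3)))
    (hO : ∀ t, t ∈ O ↔ ∃ a : EuclideanSpace ℝ (Fin 3) →ₗ[ℝ] EuclideanSpace ℝ (Fin 3),
      (∀ v w : EuclideanSpace ℝ (Fin 3), ⟪a v, w⟫_ℝ + ⟪v, a w⟫_ℝ = 0) ∧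
      ∀ j, t j = a (p j)) :
    (∀ t, (t ∈ T ∧ ∀ t' ∈ T,
        ∑ j, Matrix.det (Matrix.transpose (Matrix.of ![(t j : Fin 3 → ℝ),
          (t' j : Fin 3 → ℝ), (p j : Fin 3 → ℝ)])) / (ℓ j) ^ 2 = 0) ↔ t ∈ O) ∧
    Module.finrank ℝ O = 3 := by
  have hp : ∀ j, p j ≠ 0 := fun j h => by
    have := hlen j
    rw [h, inner_zero_left] at this
    exact (pow_pos (hℓ j) 2).ne this
  obtain rfl : O = LinearMap.range (infinitesimalRotation p) := by
    ext t
    rw [hO, exists_skew_apply_eq_iff]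
  refine ⟨fun t => ?_, ?_⟩
  · have hω : ∀ t' : Fin k → 𝔼³,
        ∑ j, (Matrix.of ![ofLp (t j), ofLp (t' j), ofLp (p j)])ᵀ.det / ℓ j ^ 2 =
          ∑ j, ⟪(⟪p j, p j⟫_ℝ)⁻¹ • euclideanCross (p j) (t j), t' j⟫_ℝ := fun t' =>
      Finset.sum_congr rfl fun j _ => by
        rw [det_transpose_eq_inner_euclideanCross, real_inner_smul_left, hlen, div_eq_inv_mul]
    simp only [hT, hω, and_imp, forall_sum_inner_eq_zero_iff, mem_range_infinitesimalRotation]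
    constructor
    · rintro ⟨⟨htp, -⟩, c, v, hx⟩
      exact ⟨v, fun j => (eq_euclideanCross_iff (hp j) _ _).mpr ⟨htp j, c j, hx j⟩⟩
    · rintro ⟨v, hv⟩
      choose htp c hc using fun j => (eq_euclideanCross_iff (hp j) _ _).mp (hv j)
      refine ⟨⟨htp, ?_⟩, c, v, hc⟩
      rw [Finset.sum_congr rfl fun j _ => hv j, ← map_sum, hsum, map_zero]
  · rw [LinearMap.finrank_range_of_inj (injective_infinitesimalRotation hcol),
      finrank_euclideanSpace_fin]
end

section
/- Let p : Fin k → ℝ³ with all p j nonzero and all collinear (scalar multiples of a common vector). Then the space {j ↦ a (p j) : a ∈ so(3)} of orbit-tangent vectors has dimension exactly 2. -/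
open scoped InnerProductSpace

noncomputable abbrev E3 := EuclideanSpace ℝ (Fin 3)

/-- skew map sending x ↦ ⟪v,x⟫ • w - ⟪w,x⟫ • v -/
noncomputable def skewMap (v w : E3) : E3 →ₗ[ℝ] E3 where
  toFun x := ⟪v, x⟫_ℝ • w - ⟪w, x⟫_ℝ • v
  map_add' x y := by
    simp [inner_add_right, add_smul]; abel
  map_smul' c x := by
    simp [inner_smul_right, smul_smul, smul_sub]

lemma skewMap_skew (v w : E3) :
    ∀ x y : E3, ⟪skewMap v w x, y⟫_ℝ + ⟪x, skewMap v w y⟫_ℝ = 0 := by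
  intro x y
  simp only [skewMap, LinearMap.coe_mk, AddHom.coe_mk, inner_sub_left, inner_sub_right,
    inner_smul_left, inner_smul_right, RCLike.conj_to_real]
  rw [real_inner_comm x v, real_inner_comm x w]
  ring

/-- For a collinear configuration of nonzero vectors, the tangent space to the
`SO(3)`-orbit has dimension exactly 2. -/
theorem orbit_dim_collinear (k : ℕ) (hk : 0 < k)
    (p : Fin k → EuclideanSpace ℝ (Fin 3))
    (hp : ∀ j, p j ≠ 0)
    (hcol : ∃ v : EuclideanSpace ℝ (Fin 3), ∀ j, ∃ c : ℝ, p j = c • v)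
    (O : Submodule ℝ (Fin k → EuclideanSpace ℝ (Fin 3)))
    (hO : ∀ t, t ∈ O ↔ ∃ a : EuclideanSpace ℝ (Fin 3) →ₗ[ℝ] EuclideanSpace ℝ (Fin 3),
      (∀ v w : EuclideanSpace ℝ (Fin 3), ⟪a v, w⟫_ℝ + ⟪v, a w⟫_ℝ = 0) ∧
      ∀ j, t j = a (p j)) :
    Module.finrank ℝ O = 2 := by
  obtain ⟨v, hv⟩ := hcol
  set j₀ : Fin k := ⟨0, hk⟩
  obtain ⟨c₀, hc₀⟩ := hv j₀
  have hc₀ne : c₀ ≠ 0 := by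
    rintro rfl; exact hp j₀ (by simp [hc₀])
  have hvne : v ≠ 0 := by
    rintro rfl; exact hp j₀ (by simp [hc₀])
  -- evaluation at j₀
  set f : O →ₗ[ℝ] E3 := (LinearMap.proj j₀).comp O.subtype with hf
  have hfapp : ∀ t : O, f t = (t : Fin k → E3) j₀ := fun t => rfl
  have hinj : Function.Injective f := by
    rw [injective_iff_map_eq_zero]
    intro t ht
    obtain ⟨a, _, hta⟩ := (hO t).mp t.2
    have hav : a v = 0 := by
      have h0 : (t : Fin k → E3) j₀ = 0 := ht
      have : c₀ • a v = 0 := by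
        rw [← map_smul, ← hc₀, ← hta j₀, h0]
      exact (smul_eq_zero.mp this).resolve_left hc₀ne
    ext j
    obtain ⟨c, hc⟩ := hv j
    have : (t : Fin k → E3) j = 0 := by
      rw [hta j, hc, map_smul, hav, smul_zero]
    simp [this]
  have hrange : LinearMap.range f = (ℝ ∙ v)ᗮ := by
    apply le_antisymm
    · rintro _ ⟨t, rfl⟩
      obtain ⟨a, hsk, hta⟩ := (hO t).mp t.2
      rw [Submodule.mem_orthogonal_singleton_iff_inner_right]
      have havv : ⟪a v, v⟫_ℝ = 0 := by
        have h := hsk v v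
        have h2 := real_inner_comm v (a v)
        linarith
      rw [hfapp, hta j₀, hc₀, map_smul, real_inner_comm, real_inner_smul_left, havv, mul_zero]
    · intro w hw
      rw [Submodule.mem_orthogonal_singleton_iff_inner_right] at hw
      set a : E3 →ₗ[ℝ] E3 := (c₀ * ⟪v, v⟫_ℝ)⁻¹ • skewMap v w with ha
      have hask : ∀ x y : E3, ⟪a x, y⟫_ℝ + ⟪x, a y⟫_ℝ = 0 := by
        intro x y
        simp only [ha, LinearMap.smul_apply, real_inner_smul_left, real_inner_smul_right]
        rw [← mul_add, skewMap_skew v w x y, mul_zero]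
      have ht : (fun j => a (p j)) ∈ O := (hO _).mpr ⟨a, hask, fun j => rfl⟩
      refine ⟨⟨_, ht⟩, ?_⟩
      rw [hfapp]
      show a (p j₀) = w
      have hvv : ⟪v, v⟫_ℝ ≠ 0 := inner_self_ne_zero.mpr hvne
      have hwv : ⟪w, v⟫_ℝ = 0 := by rw [real_inner_comm]; exact hw
      simp only [ha, hc₀, LinearMap.smul_apply, map_smul, skewMap, LinearMap.coe_mk,
        AddHom.coe_mk, hwv, zero_smul, sub_zero]
      rw [smul_smul, smul_smul, show c₀ * (c₀ * ⟪v, v⟫_ℝ)⁻¹ * ⟪v, v⟫_ℝ = 1 by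
        rw [mul_inv, ← mul_assoc, mul_inv_cancel₀ hc₀ne, one_mul, inv_mul_cancel₀ hvv],
        one_smul]
  have h1 : Module.finrank ℝ O = Module.finrank ℝ (LinearMap.range f) :=
    (LinearEquiv.ofInjective f hinj).finrank_eq
  have h3 : Module.finrank ℝ ((ℝ ∙ v)ᗮ : Submodule ℝ (EuclideanSpace ℝ (Fin 3))) = 2 := by
    have h2 := Submodule.finrank_add_finrank_orthogonal (K := (ℝ ∙ v))
    rw [finrank_span_singleton hvne, finrank_euclideanSpace_fin] at h2
    omega
  rw [h1, hrange]
  exact h3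
end
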